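/- For every k ≥ 1 and all distinct stems σ, τ ∈ Σ_k, the operators T_σ and T_τ on ℓ²(P) have orthogonal ranges: (T_σ)* T_τ = 0. -/

import Mathlib

open scoped Classical

namespace BSpaper

/-- The single Baumslag–Solitar relator `a * b^c * (b^d * a)⁻¹` on two generators
(`true` plays the role of `a`, `false` the role of `b`). -/
def rels (c d : ℕ) : Set (FreeGroup Bool) :=
  {FreeGroup.of true * FreeGroup.of false ^ c * (FreeGroup.of false ^ d * FreeGroup.of true)⁻¹}

/-- The Baumslag–Solitar group `BS(c,d) = ⟨a, b ∣ a b^c = b^d a⟩`. -/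
abbrev Grp (c d : ℕ) := PresentedGroup (rels c d)

variable (c d : ℕ)

/-- The generator `a`. -/
def a : Grp c d := PresentedGroup.of true

/-- The generator `b`. -/
def b : Grp c d := PresentedGroup.of false

/-- The submonoid `P` of `BS(c,d)` generated by `a` and `b`. -/
def P : Submonoid (Grp c d) := Submonoid.closure {a c d, b c d}

/-- The word `b^{s₀} a b^{s₁} a ⋯ b^{s_{k-1}} a` associated to a list of digits `s_i < d`. -/
def wordStem : List (Fin d) → Grp c d
  | [] => 1
  | i :: l => b c d ^ (i : ℕ) * a c d * wordStem l

/-- `Σ_k`: the set of stems of height `k`. -/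
def SigmaSet (k : ℕ) : Set (Grp c d) :=
  {g | ∃ l : List (Fin d), l.length = k ∧ wordStem c d l = g}

/-- The data `(l, t)` of a normal-form decomposition `x = (b^{s₀} a ⋯ b^{s_{k-1}} a) * b^t`,
chosen by choice when it exists (it exists, uniquely, for every `x ∈ P`). -/
noncomputable def nf (x : Grp c d) : List (Fin d) × ℕ :=
  if h : ∃ p : List (Fin d) × ℕ, x = wordStem c d p.1 * b c d ^ p.2 then h.choose else ([], 0)

/-- The stem of `x`, i.e. the stem part of the normal form of `x`. -/
noncomputable def stem (x : Grp c d) : Grp c d := wordStem c d (nf c d x).1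

/-- The left-invariant partial order on `BS(c,d)`: `g ≤ h` iff `g⁻¹ * h ∈ P`. -/
def bsLe (g h : Grp c d) : Prop := g⁻¹ * h ∈ P c d

lemma a_mem_P : a c d ∈ P c d := Submonoid.subset_closure (Set.mem_insert _ _)

lemma b_mem_P : b c d ∈ P c d :=
  Submonoid.subset_closure (Set.mem_insert_of_mem _ rfl)

lemma wordStem_mem_P (l : List (Fin d)) : wordStem c d l ∈ P c d := by
  induction l with
  | nil => exact one_mem _
  | cons i l ih =>
      exact mul_mem (mul_mem (pow_mem (b_mem_P c d) _) (a_mem_P c d)) ih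

/-- `a` as an element of the submonoid `P`. -/
def aP : P c d := ⟨a c d, a_mem_P c d⟩

/-- `b` as an element of the submonoid `P`. -/
def bP : P c d := ⟨b c d, b_mem_P c d⟩

noncomputable abbrev l2P := lp (fun _ : P c d => ℂ) 2

/-!
Every `x ∈ P` can be written as `wordStem n * b ^ s` by pushing powers of `b` to the right
with `b ^ s * a = b ^ (s % d) * a * b ^ (c * (s / d))`. This form is unique: in the HNN
extension of `ℤ = ⟨b⟩` along `cℤ ≃ dℤ` (with `a ↦ t`) the inverse
`b^{-s} t⁻¹ b^{-s_{k-1}} ⋯ t⁻¹ b^{-s₀}` is a normal word for the transversals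
`{-r : 0 ≤ r < e}` of `eℤ`, so Britton's normal form theorem recovers the digits and `s`.
Hence two distinct stems `σ`, `τ` of the same height satisfy `σ P ∩ τ P = ∅`, so `T_σ` and
`T_τ` send the basis of `ℓ²(P)` to disjoint sets of basis vectors.
-/

open Multiplicative HNNExtension HNNExtension.NormalWord

variable {c d}

lemma a_mul_b_pow : a c d * b c d ^ c = b c d ^ d * a c d :=
  PresentedGroup.mk_eq_mk_of_mul_inv_mem rfl

lemma b_pow_mul_a (s : ℕ) :
    b c d ^ s * a c d = b c d ^ (s % d) * a c d * b c d ^ (c * (s / d)) := by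
  have hbd : b c d ^ d = a c d * b c d ^ c * (a c d)⁻¹ :=
    (mul_inv_eq_of_eq_mul a_mul_b_pow).symm
  calc b c d ^ s * a c d = b c d ^ (s % d) * (b c d ^ d) ^ (s / d) * a c d := by
        rw [← pow_mul, ← pow_add, Nat.mod_add_div]
    _ = _ := by rw [hbd, conj_pow, pow_mul]; group

lemma wordStem_append (l₁ l₂ : List (Fin d)) :
    wordStem c d (l₁ ++ l₂) = wordStem c d l₁ * wordStem c d l₂ := by
  induction l₁ with
  | nil => simp [wordStem]
  | cons i l ih => simp only [List.cons_append, wordStem, ih, mul_assoc]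

lemma exists_b_pow_mul_wordStem (hd : 0 < d) (m : List (Fin d)) (s : ℕ) :
    ∃ (m' : List (Fin d)) (s' : ℕ),
      b c d ^ s * wordStem c d m = wordStem c d m' * b c d ^ s' := by
  induction m generalizing s with
  | nil => exact ⟨[], s, by simp [wordStem]⟩
  | cons i m ih =>
      obtain ⟨m', s', h⟩ := ih (c * ((s + i) / d))
      refine ⟨⟨(s + i) % d, Nat.mod_lt _ hd⟩ :: m', s', ?_⟩
      calc b c d ^ s * wordStem c d (i :: m)
          = b c d ^ (s + i) * a c d * wordStem c d m := by simp only [wordStem, pow_add, mul_assoc]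
        _ = b c d ^ ((s + i) % d) * a c d * (b c d ^ (c * ((s + i) / d)) * wordStem c d m) := by
          rw [b_pow_mul_a]; simp only [mul_assoc]
        _ = _ := by rw [h]; simp only [wordStem, mul_assoc]

lemma exists_eq_wordStem_mul_b_pow (hd : 0 < d) {x : Grp c d} (hx : x ∈ P c d) :
    ∃ (n : List (Fin d)) (s : ℕ), x = wordStem c d n * b c d ^ s := by
  induction hx using Submonoid.closure_induction with
  | mem x hx =>
      rcases hx with rfl | rfl
      · exact ⟨[⟨0, hd⟩], 0, by simp [wordStem]⟩
      · exact ⟨[], 1, by simp [wordStem]⟩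
  | one => exact ⟨[], 0, by simp [wordStem]⟩
  | mul x y _ _ hx hy =>
      obtain ⟨n₁, s₁, rfl⟩ := hx
      obtain ⟨n₂, s₂, rfl⟩ := hy
      obtain ⟨m, s, h⟩ := exists_b_pow_mul_wordStem hd n₂ s₁
      refine ⟨n₁ ++ m, s + s₂, ?_⟩
      rw [wordStem_append, pow_add, mul_assoc, ← mul_assoc (b c d ^ s₁), h]
      simp only [mul_assoc]

def intMultiples (e : ℕ) : Subgroup (Multiplicative ℤ) :=
  AddSubgroup.toSubgroup (AddSubgroup.zmultiples (e : ℤ))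

lemma mem_intMultiples {e : ℕ} {x : Multiplicative ℤ} :
    x ∈ intMultiples e ↔ (e : ℤ) ∣ x.toAdd :=
  Int.mem_zmultiples_iff

lemma ofAdd_mul_mem_intMultiples (e : ℕ) (q : ℤ) : ofAdd ((e : ℤ) * q) ∈ intMultiples e :=
  mem_intMultiples.2 (dvd_mul_right _ _)

def multiplesEquiv (hc : 0 < c) (hd : 0 < d) : intMultiples c ≃* intMultiples d where
  toFun x := ⟨ofAdd ((d : ℤ) * (x.1.toAdd / c)), ofAdd_mul_mem_intMultiples _ _⟩
  invFun y := ⟨ofAdd ((c : ℤ) * (y.1.toAdd / d)), ofAdd_mul_mem_intMultiples _ _⟩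
  left_inv := fun ⟨x, hx⟩ => by
    ext
    simp only [toAdd_ofAdd]
    rw [Int.mul_ediv_cancel_left _ (by omega),
      Int.mul_ediv_cancel' (mem_intMultiples.1 hx)]
  right_inv := fun ⟨y, hy⟩ => by
    ext
    simp only [toAdd_ofAdd]
    rw [Int.mul_ediv_cancel_left _ (by omega),
      Int.mul_ediv_cancel' (mem_intMultiples.1 hy)]
  map_mul' := fun ⟨x, hx⟩ ⟨y, hy⟩ => by
    ext
    simp [Int.add_ediv_of_dvd_left (mem_intMultiples.1 hx), mul_add]

def negResidues (e : ℕ) : Set (Multiplicative ℤ) := {x | -(e : ℤ) < x.toAdd ∧ x.toAdd ≤ 0}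

lemma isComplement_intMultiples_negResidues {e : ℕ} (he : 0 < e) :
    Subgroup.IsComplement (intMultiples e : Set (Multiplicative ℤ)) (negResidues e) := by
  rw [Subgroup.isComplement_iff_existsUnique]
  intro g
  have he' : (0 : ℤ) < e := by exact_mod_cast he
  have hr := Int.emod_nonneg (-g.toAdd) he'.ne'
  have hre := Int.emod_lt_of_pos (-g.toAdd) he'
  have hdvd : (e : ℤ) ∣ g.toAdd + (-g.toAdd) % e := by
    simpa [sub_eq_add_neg, add_comm] using (Int.mod_modEq (-g.toAdd) e).symm.dvd
  refine ⟨(⟨ofAdd (g.toAdd + (-g.toAdd) % e), mem_intMultiples.2 (by simpa using hdvd)⟩,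
      ⟨ofAdd (-((-g.toAdd) % e)), by rw [negResidues, Set.mem_ofPred_eq, toAdd_ofAdd]; omega⟩),
    by simp only [← ofAdd_add, add_neg_cancel_right, ofAdd_toAdd], ?_⟩
  rintro ⟨⟨x, hx⟩, ⟨y, hy⟩⟩ hxy
  have hsum : x.toAdd + y.toAdd = g.toAdd := by rw [← hxy]; rfl
  have hmod : -y.toAdd ≡ -g.toAdd [ZMOD e] := by
    rw [Int.modEq_iff_dvd, show -g.toAdd - -y.toAdd = -x.toAdd by omega]
    exact dvd_neg.2 (mem_intMultiples.1 hx)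
  have hres : -y.toAdd = (-g.toAdd) % e := by
    rw [← hmod, Int.emod_eq_of_lt (by linarith [hy.2]) (by linarith [hy.1])]
  refine Prod.ext (Subtype.ext ?_) (Subtype.ext ?_) <;> apply toAdd.injective <;>
    simp only [toAdd_ofAdd] <;> linarith


section HNNModel

variable (hc : 0 < c) (hd : 0 < d)

lemma multiplesEquiv_apply (q : ℤ) :
    (multiplesEquiv hc hd ⟨ofAdd ((c : ℤ) * q), ofAdd_mul_mem_intMultiples _ _⟩ :
      Multiplicative ℤ) = ofAdd ((d : ℤ) * q) := by
  change ofAdd ((d : ℤ) * (toAdd (ofAdd ((c : ℤ) * q)) / c)) = _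
  rw [toAdd_ofAdd, Int.mul_ediv_cancel_left _ (by omega)]

/-- `BS(c,d)` as the HNN extension of `ℤ = ⟨b⟩` identifying `cℤ` with `dℤ`. -/
abbrev BSHNN := HNNExtension (Multiplicative ℤ) (intMultiples c) (intMultiples d)
  (multiplesEquiv hc hd)

def bsTransversalPair : TransversalPair (Multiplicative ℤ) (intMultiples c) (intMultiples d) where
  set u := if u = 1 then negResidues c else negResidues d
  compl u := by
    rcases Int.units_eq_one_or u with rfl | rfl
    · simpa using isComplement_intMultiples_negResidues hc
    · simpa using isComplement_intMultiples_negResidues hd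

def toHNN : Grp c d →* BSHNN hc hd :=
  PresentedGroup.toGroup (f := fun x => if x then t else of (ofAdd 1)) <| by
    rintro _ rfl
    have h := t_mul_of (φ := multiplesEquiv hc hd)
      ⟨ofAdd ((c : ℤ) * 1), ofAdd_mul_mem_intMultiples _ _⟩
    rw [multiplesEquiv_apply] at h
    simp only [map_mul, map_inv, map_pow, FreeGroup.lift_apply_of, if_true, Bool.false_eq_true,
      if_false, mul_inv_eq_one]
    rw [← map_pow of, ← map_pow of, ← ofAdd_nsmul, ← ofAdd_nsmul]
    simpa using h

lemma toHNN_a : toHNN hc hd (a c d) = t := PresentedGroup.toGroup.of _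

lemma toHNN_b_pow (n : ℕ) : toHNN hc hd (b c d ^ n) = of (ofAdd (n : ℤ)) := by
  rw [map_pow, b, toHNN, PresentedGroup.toGroup.of]
  simp [← map_pow, ← ofAdd_nsmul]

def invNormalWord (n : List (Fin d)) (s : ℕ) : NormalWord (bsTransversalPair hc hd) where
  head := ofAdd (-(s : ℤ))
  toList := n.reverse.map fun i : Fin d => (-1, ofAdd (-((i : ℕ) : ℤ)))
  mem_set := by
    simp only [List.mem_map, Prod.mk.injEq]
    rintro _ _ ⟨i, -, rfl, rfl⟩
    simp [bsTransversalPair, negResidues]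
  chain := (List.isChain_map _).2 (List.pairwise_of_forall fun _ _ _ => rfl).isChain

lemma invNormalWord_prod (n : List (Fin d)) (s : ℕ) :
    (invNormalWord hc hd n s).prod (multiplesEquiv hc hd)
      = (toHNN hc hd (wordStem c d n * b c d ^ s))⁻¹ := by
  induction n with
  | nil => simp [ReducedWord.prod, invNormalWord, wordStem, toHNN_b_pow, ← map_inv]
  | cons i l ih =>
      have hstep : (invNormalWord hc hd (i :: l) s).prod (multiplesEquiv hc hd)
          = (invNormalWord hc hd l s).prod (multiplesEquiv hc hd)
            * (t⁻¹ * of (ofAdd (-((i : ℕ) : ℤ)))) := by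
        simp [ReducedWord.prod, invNormalWord, mul_assoc]
      rw [hstep, ih]
      simp only [wordStem, map_mul, toHNN_b_pow, toHNN_a, mul_inv_rev, ofAdd_neg, map_inv,
        mul_assoc]

end HNNModel

lemma eq_of_wordStem_mul_b_pow_eq (hc : 0 < c) (hd : 0 < d) {n₁ n₂ : List (Fin d)}
    {s₁ s₂ : ℕ} (h : wordStem c d n₁ * b c d ^ s₁ = wordStem c d n₂ * b c d ^ s₂) :
    n₁ = n₂ ∧ s₁ = s₂ := by
  have hw : invNormalWord hc hd n₁ s₁ = invNormalWord hc hd n₂ s₂ :=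
    prod_injective (multiplesEquiv hc hd) (bsTransversalPair hc hd) <| by
      simp only [invNormalWord_prod, h]
  have hhead := congrArg (·.head) hw
  have hlist := congrArg (·.toList) hw
  simp only [invNormalWord, ofAdd_neg, List.map_reverse, inv_inj, EmbeddingLike.apply_eq_iff_eq,
    Nat.cast_inj, List.reverse_inj] at hhead hlist
  refine ⟨List.map_injective_iff.2 (fun i j hij => ?_) hlist, hhead⟩
  simpa [Fin.val_inj] using hij

lemma wordStem_mul_ne_wordStem_mul (hc : 0 < c) (hd : 0 < d) {l₁ l₂ : List (Fin d)}
    (hlen : l₁.length = l₂.length) (hne : wordStem c d l₁ ≠ wordStem c d l₂)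
    {y z : Grp c d} (hy : y ∈ P c d) (hz : z ∈ P c d) :
    wordStem c d l₁ * y ≠ wordStem c d l₂ * z := by
  obtain ⟨m₁, s₁, rfl⟩ := exists_eq_wordStem_mul_b_pow hd hy
  obtain ⟨m₂, s₂, rfl⟩ := exists_eq_wordStem_mul_b_pow hd hz
  intro h
  simp only [← mul_assoc, ← wordStem_append] at h
  exact hne (congrArg _ (List.append_inj (eq_of_wordStem_mul_b_pow_eq hc hd h).1 hlen).1)

open ContinuousLinearMap in
lemma adjoint_mul_eq_zero_of_forall_mul_ne {ι 𝕜 : Type*} [Mul ι] [DecidableEq ι] [RCLike 𝕜]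
    (T : ι → (lp (fun _ : ι => 𝕜) 2 →L[𝕜] lp (fun _ : ι => 𝕜) 2))
    (hT : ∀ x y, T x (lp.single 2 y 1) = lp.single 2 (x * y) 1) {σ τ : ι}
    (hsep : ∀ y z, σ * y ≠ τ * z) : adjoint (T σ) * T τ = 0 := by
  refine lp.ext_continuousLinearMap ENNReal.ofNat_ne_top fun z => ?_
  refine ContinuousLinearMap.ext_ring ?_
  simp only [comp_apply, mul_apply_eq_comp, zero_apply, lp.singleContinuousLinearMap_apply, hT]
  ext y
  have h := adjoint_inner_right (T σ) (lp.single 2 y 1) (lp.single 2 (τ * z) 1)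
  rw [hT, lp.inner_single_left, lp.inner_single_left, lp.single_apply,
    Pi.single_eq_of_ne (hsep y z)] at h
  simpa using h

open ContinuousLinearMap in
theorem statement10_general (c d : ℕ) (hc : 0 < c) (hd : 0 < d)
    (T : P c d → (l2P c d →L[ℂ] l2P c d))
    (hT : ∀ x y : P c d, T x (lp.single 2 y 1) = lp.single 2 (x * y) 1)
    (k : ℕ) (l₁ l₂ : List (Fin d))
    (h₁ : l₁.length = k) (h₂ : l₂.length = k)
    (hne : wordStem c d l₁ ≠ wordStem c d l₂) :
    adjoint (T ⟨wordStem c d l₁, wordStem_mem_P c d l₁⟩)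
        * T ⟨wordStem c d l₂, wordStem_mem_P c d l₂⟩ = 0 :=
  adjoint_mul_eq_zero_of_forall_mul_ne T hT fun y z h =>
    wordStem_mul_ne_wordStem_mul hc hd (h₁.trans h₂.symm) hne y.2 z.2 (congrArg Subtype.val h)

open ContinuousLinearMap in
/-- For every k ≥ 1 and all distinct stems σ, τ ∈ Σ_k (given by digit strings l₁, l₂ of
length k), the operators T_σ and T_τ on ℓ²(P) have orthogonal ranges: (T_σ)* T_τ = 0. -/
theorem statement10 (c d : ℕ) (hc : 0 < c) (hd : 0 < d)
    (T : P c d → (l2P c d →L[ℂ] l2P c d))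
    (hT : ∀ x y : P c d, T x (lp.single 2 y 1) = lp.single 2 (x * y) 1)
    (k : ℕ) (hk : 1 ≤ k) (l₁ l₂ : List (Fin d))
    (h₁ : l₁.length = k) (h₂ : l₂.length = k)
    (hne : wordStem c d l₁ ≠ wordStem c d l₂) :
    adjoint (T ⟨wordStem c d l₁, wordStem_mem_P c d l₁⟩)
        * T ⟨wordStem c d l₂, wordStem_mem_P c d l₂⟩ = 0 :=
  statement10_general c d hc hd T hT k l₁ l₂ h₁ h₂ hne

end BSpaper
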